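/- arXiv:2305.02130 — 2 statements merged into one kernel-verified Lean document; each statement's English description precedes it below -/
import Mathlib

section
/- There exists a universal constant C > 0 with the following property. For every M > 1 and every ε > 0 with 2Mε < 1, let θ_ε : [ε,1] → [0,1] be defined by θ_ε(t) = 0 for t ∈ [ε, Mε), θ_ε(t) = t/(Mε) − 1 for t ∈ [Mε, 2Mε), and θ_ε(t) = 1 for t ∈ [2Mε, 1], and let u_ε : A_{ε,1}(0) → ℝ² be u_ε(x) := R(θ_ε(|x|)) x, where R(θ) is the rotation matrix with rows (cos θ, sin θ) and (−sin θ, cos θ). Then ∫_{A_{ε,1}(0)} dist²(∇u_ε, SO(2)) dx ≤ C M² ε². -/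
open MeasureTheory Metric Set Filter Topology Pointwise
open scoped ENNReal NNReal

noncomputable section

attribute [local instance] Matrix.frobeniusNormedAddCommGroup Matrix.frobeniusNormedSpace

/-- The plane `ℝ²` with the Euclidean structure. -/
abbrev E2 : Type := EuclideanSpace ℝ (Fin 2)

/-- `2×2` real matrices (endowed, via a local instance, with the Frobenius norm). -/
abbrev Mat2 : Type := Matrix (Fin 2) (Fin 2) ℝ

/-- The set of rotations of the plane. -/
def SO2 : Set Mat2 := {R : Mat2 | R.transpose * R = 1 ∧ R.det = 1}

/-- Euclidean (Frobenius) distance of a matrix from `SO(2)`. -/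
def distSO2 (M : Mat2) : ℝ := Metric.infDist M SO2

def toE2 (v : Fin 2 → ℝ) : E2 := (WithLp.equiv 2 (Fin 2 → ℝ)).symm v

def ofE2 (v : E2) : Fin 2 → ℝ := (WithLp.equiv 2 (Fin 2 → ℝ)) v

/-- A matrix acting on a Euclidean vector. -/
def mvec (M : Mat2) (v : E2) : E2 := toE2 (M.mulVec (ofE2 v))

/-- Standard basis vectors of `ℝ²`. -/
def stdE2 (i : Fin 2) : E2 := EuclideanSpace.single i 1

/-- The scalar `⟨a ∧ b, e₃⟩ = a₁b₂ - a₂b₁`. -/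
def cross2 (a b : E2) : ℝ := ofE2 a 0 * ofE2 b 1 - ofE2 a 1 * ofE2 b 0

/-- Frobenius inner product of two matrices. -/
def minner (A B : Mat2) : ℝ := ∑ i : Fin 2, ∑ j : Fin 2, A i j * B i j

/-- A bounded open planar set whose boundary is locally (after a rotation) the subgraph of a
Lipschitz function: "bounded open set with Lipschitz continuous boundary". -/
def IsLipschitzDomain (E : Set E2) : Prop :=
  IsOpen E ∧ Bornology.IsBounded E ∧
    ∀ p ∈ frontier E, ∃ (Q : Mat2) (f : ℝ → ℝ) (L r : ℝ),
      Q ∈ SO2 ∧ 0 < r ∧ 0 ≤ L ∧ LipschitzWith (Real.toNNReal L) f ∧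
      ∀ x ∈ ball p r, (x ∈ E ↔ ofE2 (mvec Q (x - p)) 1 < f (ofE2 (mvec Q (x - p)) 0))

/-- The open annulus of radii `r < R` centred at `x`. -/
def annulus (x : E2) (r R : ℝ) : Set E2 := ball x R \ closedBall x r

/-- Row-wise distributional `Curl` of a matrix field vanishes on the open set `U`. -/
def CurlZeroOn (β : E2 → Mat2) (U : Set E2) : Prop :=
  ∀ φ : E2 → ℝ, ContDiff ℝ (⊤ : ℕ∞) φ → HasCompactSupport φ → tsupport φ ⊆ U →
    ∀ i : Fin 2,
      (∫ x, (β x i 0 * fderiv ℝ φ x (stdE2 1) - β x i 1 * fderiv ℝ φ x (stdE2 0))) = 0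

/-- Circulation `∫_{∂B_r(x)} β t dH¹` of a matrix field along the circle of radius `r`
centred at `x` (computed via the standard parametrization). -/
def circVec (β : E2 → Mat2) (x : E2) (r : ℝ) : E2 :=
  ∫ θ in (0:ℝ)..(2 * Real.pi),
    r • toE2 ((β (x + r • toE2 ![Real.cos θ, Real.sin θ])).mulVec ![-(Real.sin θ), Real.cos θ])
/-- The rotation matrix with rows `(cos θ, sin θ)` and `(-sin θ, cos θ)`. -/
def rotMat (θ : ℝ) : Mat2 := !![Real.cos θ, Real.sin θ; -Real.sin θ, Real.cos θ]

open Classical in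
/-- The radial profile `θ_ε`. -/
def thetaEps (M ε t : ℝ) : ℝ :=
  if t < M * ε then 0 else if t < 2 * M * ε then t / (M * ε) - 1 else 1

/-- The matrix of the (a.e. defined) gradient of a map `u : ℝ² → ℝ²`. -/
def gradMat (u : E2 → E2) (x : E2) : Mat2 :=
  Matrix.of fun i j => ofE2 (fderiv ℝ u x (stdE2 j)) i

/-! ### Auxiliary lemmas -/

lemma ofE2_toE2 (v : Fin 2 → ℝ) : ofE2 (toE2 v) = v := rfl

lemma toE2_ofE2 (v : E2) : toE2 (ofE2 v) = v := rfl

lemma norm_toE2 (v : Fin 2 → ℝ) : ‖toE2 v‖ = Real.sqrt (v 0 ^ 2 + v 1 ^ 2) := by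
  rw [EuclideanSpace.norm_eq]
  simp [Fin.sum_univ_two, toE2, Real.norm_eq_abs, sq_abs]

lemma abs_ofE2_le (v : E2) (i : Fin 2) : |ofE2 v i| ≤ ‖v‖ := by
  have key : ∀ w : Fin 2 → ℝ, |w i| ≤ Real.sqrt (w 0 ^ 2 + w 1 ^ 2) := by
    intro w
    rw [← Real.sqrt_sq_eq_abs]
    apply Real.sqrt_le_sqrt
    fin_cases i <;> simp <;> nlinarith [sq_nonneg (w 0), sq_nonneg (w 1)]
  exact (key (ofE2 v)).trans (le_of_eq (norm_toE2 (ofE2 v)).symm)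

lemma mulVec_rotlike (p q : ℝ) (v : Fin 2 → ℝ) :
    (!![p, q; -q, p]).mulVec v = ![p * v 0 + q * v 1, -q * v 0 + p * v 1] := by
  funext i
  fin_cases i <;> simp [Matrix.mulVec, dotProduct, Fin.sum_univ_two]

lemma norm_rotlike (p q : ℝ) (v : Fin 2 → ℝ) :
    ‖toE2 ((!![p, q; -q, p]).mulVec v)‖ = Real.sqrt (p ^ 2 + q ^ 2) * ‖toE2 v‖ := by
  rw [mulVec_rotlike, norm_toE2, norm_toE2, ← Real.sqrt_mul (by positivity)]
  congr 1
  simp only [Matrix.cons_val_zero, Matrix.cons_val_one, Matrix.head_cons]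
  ring

lemma rotMat_eq (θ : ℝ) : rotMat θ = !![Real.cos θ, Real.sin θ; -Real.sin θ, Real.cos θ] := rfl

lemma rotMat_sub (a b : ℝ) : rotMat a - rotMat b =
    !![Real.cos a - Real.cos b, Real.sin a - Real.sin b;
       -(Real.sin a - Real.sin b), Real.cos a - Real.cos b] := by
  rw [rotMat_eq, rotMat_eq]
  ext i j; fin_cases i <;> fin_cases j <;> simp <;> ring

lemma rotMat_mem_SO2 (θ : ℝ) : rotMat θ ∈ SO2 := by
  have ht : (rotMat θ).transpose = !![Real.cos θ, -Real.sin θ; Real.sin θ, Real.cos θ] := by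
    ext i j; fin_cases i <;> fin_cases j <;> simp [rotMat]
  constructor
  · rw [ht, rotMat, Matrix.mul_fin_two]
    ext i j; fin_cases i <;> fin_cases j <;>
      simp [Matrix.one_apply] <;> nlinarith [Real.sin_sq_add_cos_sq θ]
  · rw [rotMat, Matrix.det_fin_two_of]; nlinarith [Real.sin_sq_add_cos_sq θ]

lemma abs_sin_sub_sin (a b : ℝ) : |Real.sin a - Real.sin b| ≤ |a - b| := by
  rw [Real.sin_sub_sin]
  calc |2 * Real.sin ((a-b)/2) * Real.cos ((a+b)/2)|
      = 2 * |Real.sin ((a-b)/2)| * |Real.cos ((a+b)/2)| := by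
        rw [abs_mul, abs_mul]; norm_num
    _ ≤ 2 * |(a-b)/2| * 1 :=
        mul_le_mul (by nlinarith [Real.abs_sin_le_abs (x := (a-b)/2), abs_nonneg ((a-b)/2)])
          (Real.abs_cos_le_one _) (abs_nonneg _) (by positivity)
    _ = |a - b| := by rw [abs_div, abs_two]; ring

lemma abs_cos_sub_cos (a b : ℝ) : |Real.cos a - Real.cos b| ≤ |a - b| := by
  rw [Real.cos_sub_cos]
  calc |(-2) * Real.sin ((a+b)/2) * Real.sin ((a-b)/2)|
      = 2 * |Real.sin ((a+b)/2)| * |Real.sin ((a-b)/2)| := by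
        rw [abs_mul, abs_mul]; norm_num
    _ ≤ 2 * 1 * |(a-b)/2| := by
        have h1 := Real.abs_sin_le_one ((a+b)/2)
        have h2 := Real.abs_sin_le_abs (x := (a-b)/2)
        have h3 := abs_nonneg (Real.sin ((a-b)/2))
        nlinarith [abs_nonneg (Real.sin ((a+b)/2)), abs_nonneg ((a-b)/2)]
    _ = |a - b| := by rw [abs_div, abs_two]; ring

/-! ### The profile `thetaEps` -/

lemma thetaEps_eq {M ε : ℝ} (hm : 0 < M * ε) (t : ℝ) :
    thetaEps M ε t = min 1 (max 0 (t / (M * ε) - 1)) := by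
  unfold thetaEps
  split_ifs with h1 h2
  · rw [max_eq_left, min_eq_right] <;> nlinarith [(div_lt_one hm).2 h1]
  · rw [max_eq_right, min_eq_right]
    · nlinarith [(div_lt_iff₀ hm).2 (by linarith : t < 2 * (M * ε))]
    · nlinarith [(le_div_iff₀ hm).2 (by linarith : 1 * (M * ε) ≤ t)]
  · rw [max_eq_right, min_eq_left]
    · nlinarith [(le_div_iff₀ hm).2 (by linarith : 2 * (M * ε) ≤ t)]
    · nlinarith [(le_div_iff₀ hm).2 (by linarith : 1 * (M * ε) ≤ t)]

lemma thetaEps_mem {M ε : ℝ} (hm : 0 < M * ε) (t : ℝ) :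
    thetaEps M ε t ∈ Set.Icc (0:ℝ) 1 := by
  rw [thetaEps_eq hm]
  exact ⟨le_min one_pos.le (le_max_left _ _), min_le_left _ _⟩

lemma abs_min_max_sub (a b : ℝ) :
    |min 1 (max 0 a) - min 1 (max 0 b)| ≤ |a - b| := by
  calc |min 1 (max 0 a) - min 1 (max 0 b)|
      ≤ max |(1:ℝ) - 1| |max 0 a - max 0 b| := abs_min_sub_min_le_max _ _ _ _
    _ ≤ |a - b| := by
        rw [sub_self, abs_zero, max_comm (0:ℝ) a, max_comm (0:ℝ) b]
        exact max_le (abs_nonneg _) (abs_max_sub_max_le_abs _ _ _)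

lemma thetaEps_lip {M ε : ℝ} (hm : 0 < M * ε) (s t : ℝ) :
    |thetaEps M ε s - thetaEps M ε t| ≤ |s - t| / (M * ε) := by
  rw [thetaEps_eq hm, thetaEps_eq hm]
  calc |min 1 (max 0 (s / (M*ε) - 1)) - min 1 (max 0 (t / (M*ε) - 1))|
      ≤ |(s / (M*ε) - 1) - (t / (M*ε) - 1)| := abs_min_max_sub _ _
    _ = |s - t| / (M * ε) := by
        rw [show s / (M*ε) - 1 - (t / (M*ε) - 1) = (s - t) / (M*ε) by ring,
          abs_div, abs_of_pos hm]

lemma thetaEps_key {M ε : ℝ} (hm : 0 < M * ε) {s t : ℝ} (hts : t ≤ s) (ht : 0 ≤ t) :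
    |thetaEps M ε s - thetaEps M ε t| * t ≤ 2 * (s - t) := by
  set m := M * ε with hmdef
  by_cases h2m : 2 * m ≤ t
  · have hs : thetaEps M ε s = 1 := by
      unfold thetaEps; rw [if_neg (by linarith), if_neg (by push_neg; linarith)]
    have htt : thetaEps M ε t = 1 := by
      unfold thetaEps; rw [if_neg (by linarith), if_neg (by push_neg; linarith)]
    simp [hs, htt]; linarith
  · push_neg at h2m
    rcases le_total (s - t) m with hc | hc
    · calc |thetaEps M ε s - thetaEps M ε t| * t ≤ (|s - t| / m) * t :=
          mul_le_mul_of_nonneg_right (thetaEps_lip hm s t) ht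
        _ ≤ ((s - t) / m) * (2 * m) := by
            rw [abs_of_nonneg (by linarith)]
            exact mul_le_mul_of_nonneg_right (le_refl _) ht |>.trans
              (mul_le_mul_of_nonneg_left h2m.le (div_nonneg (by linarith) hm.le))
        _ = 2 * (s - t) := by field_simp
    · have h1 : |thetaEps M ε s - thetaEps M ε t| ≤ 1 := by
        have a := thetaEps_mem hm s; have b := thetaEps_mem hm t
        rw [abs_le]; constructor <;> [linarith [a.1, b.2]; linarith [a.2, b.1]]
      calc |thetaEps M ε s - thetaEps M ε t| * t ≤ 1 * t :=
          mul_le_mul_of_nonneg_right h1 ht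
        _ ≤ 2 * m := by linarith
        _ ≤ 2 * (s - t) := by linarith

/-! ### The map `u` is `4`-Lipschitz -/

lemma sqrt_two_le : Real.sqrt 2 ≤ 1.5 := by
  nlinarith [Real.sq_sqrt (by norm_num : (0:ℝ) ≤ 2), Real.sqrt_nonneg 2]

lemma u_lipschitz {M ε : ℝ} (hM : 1 < M) (hε : 0 < ε) :
    LipschitzWith 4 (fun y : E2 => mvec (rotMat (thetaEps M ε ‖y‖)) y) := by
  have hm : 0 < M * ε := mul_pos (by linarith) hε
  set u := fun y : E2 => mvec (rotMat (thetaEps M ε ‖y‖)) y with hu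
  suffices key : ∀ x y : E2, ‖x‖ ≤ ‖y‖ → dist (u x) (u y) ≤ 4 * dist x y by
    apply LipschitzWith.of_dist_le_mul
    intro x y
    rcases le_total ‖x‖ ‖y‖ with h | h
    · simpa using key x y h
    · rw [dist_comm x y, dist_comm (u x) (u y)]; simpa using key y x h
  intro x y h
  set a := thetaEps M ε ‖x‖ with ha
  set b := thetaEps M ε ‖y‖ with hb
  have keyθ : |a - b| * ‖x‖ ≤ 2 * ‖x - y‖ := by
    have h1 : |b - a| * ‖x‖ ≤ 2 * (‖y‖ - ‖x‖) := thetaEps_key hm h (norm_nonneg x)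
    have h2 : ‖y‖ - ‖x‖ ≤ ‖x - y‖ := by
      rw [norm_sub_rev]; exact (abs_le.1 (abs_norm_sub_norm_le y x)).2
    rw [abs_sub_comm] at h1
    nlinarith
  have hsplit : u x - u y =
      toE2 ((rotMat a - rotMat b).mulVec (ofE2 x)) +
      toE2 ((rotMat b).mulVec (ofE2 x - ofE2 y)) := by
    show toE2 ((rotMat a).mulVec (ofE2 x)) - toE2 ((rotMat b).mulVec (ofE2 y)) = _
    show toE2 ((rotMat a).mulVec (ofE2 x) - (rotMat b).mulVec (ofE2 y)) =
      toE2 ((rotMat a - rotMat b).mulVec (ofE2 x) + (rotMat b).mulVec (ofE2 x - ofE2 y))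
    congr 1
    rw [Matrix.sub_mulVec, Matrix.mulVec_sub]
    abel
  rw [dist_eq_norm, dist_eq_norm, hsplit]
  have hfirst : ‖toE2 ((rotMat a - rotMat b).mulVec (ofE2 x))‖ ≤
      Real.sqrt 2 * (2 * ‖x - y‖) := by
    rw [rotMat_sub, norm_rotlike, toE2_ofE2]
    have hsq : Real.sqrt ((Real.cos a - Real.cos b) ^ 2 + (Real.sin a - Real.sin b) ^ 2) ≤
        Real.sqrt 2 * |a - b| := by
      have : (Real.cos a - Real.cos b) ^ 2 + (Real.sin a - Real.sin b) ^ 2 ≤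
          2 * (a - b) ^ 2 := by
        have h1 := abs_cos_sub_cos a b
        have h2 := abs_sin_sub_sin a b
        have hc2 : (Real.cos a - Real.cos b) ^ 2 ≤ (a - b) ^ 2 := by
          rw [← sq_abs (Real.cos a - Real.cos b), ← sq_abs (a - b)]
          exact pow_le_pow_left₀ (abs_nonneg _) h1 2
        have hs2 : (Real.sin a - Real.sin b) ^ 2 ≤ (a - b) ^ 2 := by
          rw [← sq_abs (Real.sin a - Real.sin b), ← sq_abs (a - b)]
          exact pow_le_pow_left₀ (abs_nonneg _) h2 2
        linarith
      calc Real.sqrt ((Real.cos a - Real.cos b) ^ 2 + (Real.sin a - Real.sin b) ^ 2)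
          ≤ Real.sqrt (2 * (a - b) ^ 2) := Real.sqrt_le_sqrt this
        _ = Real.sqrt 2 * |a - b| := by
            rw [Real.sqrt_mul (by norm_num), Real.sqrt_sq_eq_abs]
    calc Real.sqrt ((Real.cos a - Real.cos b) ^ 2 + (Real.sin a - Real.sin b) ^ 2) * ‖x‖
        ≤ (Real.sqrt 2 * |a - b|) * ‖x‖ :=
          mul_le_mul_of_nonneg_right hsq (norm_nonneg x)
      _ = Real.sqrt 2 * (|a - b| * ‖x‖) := by ring
      _ ≤ Real.sqrt 2 * (2 * ‖x - y‖) :=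
          mul_le_mul_of_nonneg_left keyθ (Real.sqrt_nonneg 2)
  have hsecond : ‖toE2 ((rotMat b).mulVec (ofE2 x - ofE2 y))‖ = ‖x - y‖ := by
    rw [rotMat_eq, norm_rotlike]
    rw [show Real.cos b ^ 2 + Real.sin b ^ 2 = 1 by
      nlinarith [Real.sin_sq_add_cos_sq b], Real.sqrt_one, one_mul]
    rfl
  calc ‖toE2 ((rotMat a - rotMat b).mulVec (ofE2 x)) +
        toE2 ((rotMat b).mulVec (ofE2 x - ofE2 y))‖
      ≤ Real.sqrt 2 * (2 * ‖x - y‖) + ‖x - y‖ := by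
        refine (norm_add_le _ _).trans ?_
        rw [hsecond]
        exact add_le_add hfirst le_rfl
    _ ≤ 4 * ‖x - y‖ := by nlinarith [sqrt_two_le, norm_nonneg (x - y)]
    _ = (4:ℝ≥0) * ‖x - y‖ := by norm_num

/-! ### Pointwise bounds on `gradMat` -/

def matCLM (A : Mat2) : E2 →L[ℝ] E2 :=
  LinearMap.toContinuousLinearMap
    (((WithLp.linearEquiv 2 ℝ (Fin 2 → ℝ)).symm.toLinearMap.comp A.mulVecLin).comp
      (WithLp.linearEquiv 2 ℝ (Fin 2 → ℝ)).toLinearMap)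

lemma ofE2_stdE2 (j : Fin 2) : ofE2 (stdE2 j) = Pi.single j 1 :=
  rfl

lemma gradMat_of_eventually (A : Mat2) (u : E2 → E2) (x : E2)
    (h : u =ᶠ[𝓝 x] fun y => mvec A y) : gradMat u x = A := by
  have hd : HasFDerivAt (fun y => mvec A y) (matCLM A) x := by
    exact (matCLM A).hasFDerivAt (x := x)
  have hfd : fderiv ℝ u x = matCLM A := by
    rw [h.fderiv_eq, hd.fderiv]
  ext i j
  show ofE2 (fderiv ℝ u x (stdE2 j)) i = A i j
  rw [hfd]
  show ofE2 (mvec A (stdE2 j)) i = A i j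
  unfold mvec
  rw [ofE2_toE2, ofE2_stdE2, Matrix.mulVec_single]
  simp

lemma gradMat_entry_bound {u : E2 → E2} (hlip : LipschitzWith 4 u) (x : E2) (i j : Fin 2) :
    |gradMat u x i j| ≤ 4 := by
  show |ofE2 (fderiv ℝ u x (stdE2 j)) i| ≤ 4
  calc |ofE2 (fderiv ℝ u x (stdE2 j)) i| ≤ ‖fderiv ℝ u x (stdE2 j)‖ := abs_ofE2_le _ i
    _ ≤ ‖fderiv ℝ u x‖ * ‖stdE2 j‖ := (fderiv ℝ u x).le_opNorm _
    _ = ‖fderiv ℝ u x‖ := by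
        rw [show ‖stdE2 j‖ = 1 by simp [stdE2, EuclideanSpace.norm_single], mul_one]
    _ ≤ 4 := by simpa using norm_fderiv_le_of_lipschitz ℝ hlip (x₀ := x)

lemma distSO2_bound {u : E2 → E2} (hlip : LipschitzWith 4 u) (x : E2) :
    distSO2 (gradMat u x) ≤ 10 := by
  have h1 : distSO2 (gradMat u x) ≤ dist (gradMat u x) (rotMat 0) :=
    Metric.infDist_le_dist_of_mem (rotMat_mem_SO2 0)
  refine h1.trans ?_
  rw [dist_eq_norm, Matrix.frobenius_norm_def]
  have hentry : ∀ i j : Fin 2, ‖(gradMat u x - rotMat 0) i j‖ ^ (2:ℝ) ≤ 25 := by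
    intro i j
    have h2 : |(gradMat u x - rotMat 0) i j| ≤ 5 := by
      have h3 := gradMat_entry_bound hlip x i j
      have h4 : |rotMat 0 i j| ≤ 1 := by
        fin_cases i <;> fin_cases j <;> simp [rotMat]
      calc |(gradMat u x - rotMat 0) i j| = |gradMat u x i j - rotMat 0 i j| := by
            rw [Matrix.sub_apply]
        _ ≤ |gradMat u x i j| + |rotMat 0 i j| := abs_sub _ _
        _ ≤ 5 := by linarith
    rw [Real.norm_eq_abs, show (2:ℝ) = ((2:ℕ):ℝ) by norm_num, Real.rpow_natCast]
    nlinarith [abs_nonneg ((gradMat u x - rotMat 0) i j)]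
  have hsum : ∑ i : Fin 2, ∑ j : Fin 2, ‖(gradMat u x - rotMat 0) i j‖ ^ (2:ℝ) ≤ 100 := by
    rw [Fin.sum_univ_two, Fin.sum_univ_two, Fin.sum_univ_two]
    linarith [hentry 0 0, hentry 0 1, hentry 1 0, hentry 1 1]
  calc (∑ i : Fin 2, ∑ j : Fin 2, ‖(gradMat u x - rotMat 0) i j‖ ^ (2:ℝ)) ^ (1/2:ℝ)
      ≤ (100:ℝ) ^ (1/2:ℝ) := by
        apply Real.rpow_le_rpow _ hsum (by norm_num)
        positivity
    _ = 10 := by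
        rw [show (100:ℝ) = 10 ^ (2:ℕ) by norm_num, ← Real.rpow_natCast (10:ℝ) 2,
          ← Real.rpow_mul (by norm_num)]
        norm_num

/-! ### Main theorem -/

/-- non-rigidity example from Remark 1.5. -/
theorem slow_rotation_energy_estimate :
    ∃ C > 0, ∀ M : ℝ, 1 < M → ∀ ε : ℝ, 0 < ε → 2 * M * ε < 1 →
      (∫ x in annulus 0 ε 1,
          distSO2 (gradMat (fun y : E2 => mvec (rotMat (thetaEps M ε ‖y‖)) y) x) ^ 2) ≤
        C * M ^ 2 * ε ^ 2 := by
  set c0 := (volume (ball (0:E2) 1)).toReal with hc0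
  have hc0nn : 0 ≤ c0 := ENNReal.toReal_nonneg
  refine ⟨400 * c0 + 1, by linarith, ?_⟩
  intro M hM ε hε h2
  set m := M * ε with hmdef
  have hm : 0 < m := mul_pos (by linarith) hε
  set u := fun y : E2 => mvec (rotMat (thetaEps M ε ‖y‖)) y with hu
  have hlip : LipschitzWith 4 u := u_lipschitz hM hε
  set f := fun x : E2 => distSO2 (gradMat u x) ^ 2 with hf
  set S : Set E2 := closedBall 0 (2 * m) \ ball 0 m with hS
  have hSmeas : MeasurableSet S := measurableSet_closedBall.diff measurableSet_ball
  have hAnn : MeasurableSet (annulus (0:E2) ε 1) :=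
    measurableSet_ball.diff measurableSet_closedBall
  -- `f` vanishes off `S`
  have hzero : ∀ x : E2, x ∉ S → f x = 0 := by
    intro x hxS
    have hmem : gradMat u x ∈ SO2 := by
      have hcase : ‖x‖ < m ∨ 2 * m < ‖x‖ := by
        by_contra hcon
        push_neg at hcon
        exact hxS ⟨by simpa [mem_closedBall, dist_zero_right] using hcon.2,
          by simpa [mem_ball, dist_zero_right] using hcon.1⟩
      rcases hcase with hlt | hgt
      · have hnb : Metric.ball (0:E2) m ∈ 𝓝 x :=
          isOpen_ball.mem_nhds (by simpa [mem_ball, dist_zero_right] using hlt)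
        have hev : u =ᶠ[𝓝 x] fun y => mvec (rotMat 0) y := by
          filter_upwards [hnb] with y hy
          have hy' : ‖y‖ < m := by simpa [mem_ball, dist_zero_right] using hy
          show mvec (rotMat (thetaEps M ε ‖y‖)) y = mvec (rotMat 0) y
          rw [show thetaEps M ε ‖y‖ = 0 from if_pos hy']
        rw [gradMat_of_eventually _ _ _ hev]
        exact rotMat_mem_SO2 0
      · have hnb : (closedBall (0:E2) (2 * m))ᶜ ∈ 𝓝 x :=
          (isOpen_compl_iff.mpr Metric.isClosed_closedBall).mem_nhds
            (by simp only [mem_compl_iff, mem_closedBall, dist_zero_right, not_le]; exact hgt)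
        have hev : u =ᶠ[𝓝 x] fun y => mvec (rotMat 1) y := by
          filter_upwards [hnb] with y hy
          have hy' : 2 * m < ‖y‖ := by
            simpa [mem_compl_iff, mem_closedBall, dist_zero_right, not_le] using hy
          show mvec (rotMat (thetaEps M ε ‖y‖)) y = mvec (rotMat 1) y
          have e1 : thetaEps M ε ‖y‖ = 1 := by
            unfold thetaEps
            rw [if_neg (by push_neg; linarith), if_neg (by push_neg; linarith)]
          rw [e1]
        rw [gradMat_of_eventually _ _ _ hev]
        exact rotMat_mem_SO2 1
    show distSO2 (gradMat u x) ^ 2 = 0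
    rw [show distSO2 (gradMat u x) = 0 from Metric.infDist_zero_of_mem hmem]
    norm_num
  have hcongr : (∫ x in annulus 0 ε 1, f x) = ∫ x in annulus 0 ε 1 ∩ S, f x := by
    have heq : Set.EqOn f (S.indicator f) (annulus (0:E2) ε 1) := by
      intro x hx
      by_cases hxS : x ∈ S
      · rw [Set.indicator_of_mem hxS]
      · rw [Set.indicator_of_notMem hxS, hzero x hxS]
    rw [setIntegral_congr_fun hAnn heq, setIntegral_indicator hSmeas]
  have hfin : volume (annulus 0 ε 1 ∩ S) < ⊤ :=
    lt_of_le_of_lt (measure_mono (fun x hx => hx.2.1)) measure_closedBall_lt_top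
  have hbound : ∀ x ∈ annulus 0 ε 1 ∩ S, ‖f x‖ ≤ 100 := by
    intro x _
    have h10 : distSO2 (gradMat u x) ≤ 10 := distSO2_bound hlip x
    have hnn : (0:ℝ) ≤ distSO2 (gradMat u x) := Metric.infDist_nonneg
    show ‖distSO2 (gradMat u x) ^ 2‖ ≤ 100
    rw [Real.norm_eq_abs, abs_of_nonneg (by positivity)]
    nlinarith
  have hstep : (∫ x in annulus 0 ε 1 ∩ S, f x) ≤ 100 * (volume (annulus 0 ε 1 ∩ S)).toReal := by
    refine le_trans (le_abs_self _) ?_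
    rw [← Real.norm_eq_abs]
    exact norm_setIntegral_le_of_norm_le_const hfin hbound
  have hvol : (volume (annulus 0 ε 1 ∩ S)).toReal ≤ (2*m)^2 * c0 := by
    have h1 : volume (annulus 0 ε 1 ∩ S) ≤ volume (closedBall (0:E2) (2*m)) :=
      measure_mono (fun x hx => hx.2.1)
    have h2 : volume (closedBall (0:E2) (2*m)) =
        ENNReal.ofReal ((2*m) ^ Module.finrank ℝ E2) * volume (ball (0:E2) 1) :=
      Measure.addHaar_closedBall _ _ (by positivity)
    calc (volume (annulus 0 ε 1 ∩ S)).toReal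
        ≤ (volume (closedBall (0:E2) (2*m))).toReal := by
          refine ENNReal.toReal_mono ?_ h1
          rw [h2]
          exact ENNReal.mul_ne_top ENNReal.ofReal_ne_top measure_ball_lt_top.ne
      _ = (2*m)^2 * c0 := by
          rw [h2, ENNReal.toReal_mul, ENNReal.toReal_ofReal (by positivity), hc0]
          norm_num [finrank_euclideanSpace_fin]
  have hfinal : 100 * ((2*m)^2 * c0) ≤ (400 * c0 + 1) * M ^ 2 * ε ^ 2 := by
    have hMε : 0 < M ^ 2 * ε ^ 2 := by positivity
    have : (2*m)^2 = 4 * (M^2 * ε^2) := by rw [hmdef]; ring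
    nlinarith
  calc (∫ x in annulus 0 ε 1, f x) = ∫ x in annulus 0 ε 1 ∩ S, f x := hcongr
    _ ≤ 100 * (volume (annulus 0 ε 1 ∩ S)).toReal := hstep
    _ ≤ 100 * ((2*m)^2 * c0) := by linarith [mul_le_mul_of_nonneg_left hvol (by norm_num : (0:ℝ) ≤ 100)]
    _ ≤ (400 * c0 + 1) * M ^ 2 * ε ^ 2 := hfinal
end
end

section
/- Let ψ₁, ψ₂ ∈ C(ℝ; [0,∞)) satisfy ψ₁⁻¹(0) = ψ₂⁻¹(0) = {1}, ψ₁ and ψ₂ of class C² in a neighborhood of 1 with ψ₁''(1) > 0 and ψ₂''(1) > 0, and ψ₁(t) ≥ a t² − b for all t ≥ 0 for some a, b > 0. Define W : ℝ^{2×2} → [0,∞) by W(M) := (4/√3)[ ½(ψ₁(|M e₁|) + ψ₁(|M ν|) + ψ₁(|M η|)) + 3 ψ₂(det M) ], where ν = (1/2, √3/2) and η = (−1/2, √3/2). Then W satisfies: W(Id) = 0; W(RM) = W(M) for all M ∈ ℝ^{2×2} and R ∈ SO(2); W(MR) = W(M) for all M ∈ ℝ^{2×2} and R ∈ I(𝕋);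 there exists c > 0 with W(M) ≥ c dist²(M, SO(2)) for all M ∈ ℝ^{2×2}; and W is C² in a neighborhood of SO(2). -/
open MeasureTheory Metric Set Filter Topology Pointwise
open scoped ENNReal NNReal

set_option maxHeartbeats 2000000

noncomputable section

attribute [local instance] Matrix.frobeniusNormedAddCommGroup Matrix.frobeniusNormedSpace

/-- The `ℤ`-span (lattice) generated by a set `S ⊆ ℝ²`. -/
def latt (S : Set E2) : Set E2 := (AddSubgroup.closure S : AddSubgroup E2)

/-- `I(𝕊) = {R ∈ SO(2) : R𝕊 = 𝕊}`. -/
def ILat (S : Set E2) : Set Mat2 := {R | R ∈ SO2 ∧ mvec R '' latt S = latt S}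
/-- The lattice vectors `e₁`, `ν = (1/2, √3/2)`, `η = (-1/2, √3/2)`. -/
def ve1 : E2 := toE2 ![1, 0]
def vnu : E2 := toE2 ![1 / 2, Real.sqrt 3 / 2]
def veta : E2 := toE2 ![-(1 / 2), Real.sqrt 3 / 2]

/-- The regular triangular lattice `𝕋 = span_ℤ {e₁, ν}`. -/
def Tlatt : Set E2 := latt {ve1, vnu}

/-- The continuum energy density `W` associated with the potentials `ψ₁, ψ₂`. -/
def Wpsi (ψ₁ ψ₂ : ℝ → ℝ) (M : Mat2) : ℝ :=
  4 / Real.sqrt 3 *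
    ((1 / 2) * (ψ₁ ‖mvec M ve1‖ + ψ₁ ‖mvec M vnu‖ + ψ₁ ‖mvec M veta‖) + 3 * ψ₂ M.det)

/-- The assumptions on the potentials `ψ₁, ψ₂`. -/
structure PsiHyp (ψ : ℝ → ℝ) : Prop where
  cont : Continuous ψ
  nonneg : ∀ t, 0 ≤ ψ t
  zero : ∀ t, ψ t = 0 ↔ t = 1
  c2 : ∃ U : Set ℝ, IsOpen U ∧ (1 : ℝ) ∈ U ∧ ContDiffOn ℝ 2 ψ U
  posdd : 0 < iteratedDeriv 2 ψ 1

section WpsiHelpers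

/-! ### Coordinate and norm helper lemmas -/

lemma normE2_eq (v : E2) : ‖v‖ = Real.sqrt (v 0^2 + v 1^2) := by
  rw [EuclideanSpace.norm_eq]; simp [Fin.sum_univ_two, sq_abs]

lemma mvec_apply (M : Mat2) (v : E2) (i : Fin 2) :
    mvec M v i = M i 0 * v 0 + M i 1 * v 1 := by
  fin_cases i <;> simp [mvec, toE2, ofE2, Matrix.mulVec, dotProduct, Fin.sum_univ_two]

lemma norm_mvec (M : Mat2) (v : E2) :
    ‖mvec M v‖ = Real.sqrt ((M 0 0 * v 0 + M 0 1 * v 1)^2 + (M 1 0 * v 0 + M 1 1 * v 1)^2) := by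
  rw [normE2_eq, mvec_apply, mvec_apply]

lemma norm_mat_sq (A : Mat2) : ‖A‖^2 = A 0 0^2 + A 0 1^2 + A 1 0^2 + A 1 1^2 := by
  rw [Matrix.frobenius_norm_def]
  rw [← Real.rpow_natCast _ 2, ← Real.rpow_mul (by positivity)]
  norm_num [Fin.sum_univ_two, Real.rpow_natCast, sq_abs]
  ring

lemma mem_SO2_iff {R : Mat2} : R ∈ SO2 ↔ ∃ p q : ℝ,
    p^2 + q^2 = 1 ∧ R 0 0 = p ∧ R 0 1 = -q ∧ R 1 0 = q ∧ R 1 1 = p := by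
  constructor
  · rintro ⟨h1, h2⟩
    have e00 := congrFun (congrFun h1 0) 0
    have e01 := congrFun (congrFun h1 0) 1
    have e11 := congrFun (congrFun h1 1) 1
    simp [Matrix.mul_apply, Matrix.transpose_apply, Fin.sum_univ_two, Matrix.one_apply]
      at e00 e01 e11
    rw [Matrix.det_fin_two] at h2
    refine ⟨R 0 0, R 1 0, by nlinarith [e00], rfl, ?_, rfl, ?_⟩
    · have key : (R 1 1 - R 0 0)^2 + (R 0 1 + R 1 0)^2 = 0 := by
        linear_combination e00 + e11 - 2*h2
      nlinarith [sq_nonneg (R 1 1 - R 0 0), sq_nonneg (R 0 1 + R 1 0)]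
    · have key : (R 1 1 - R 0 0)^2 + (R 0 1 + R 1 0)^2 = 0 := by
        linear_combination e00 + e11 - 2*h2
      nlinarith [sq_nonneg (R 1 1 - R 0 0), sq_nonneg (R 0 1 + R 1 0)]
  · rintro ⟨p, q, hpq, h00, h01, h10, h11⟩
    constructor
    · ext i j
      fin_cases i <;> fin_cases j <;>
        simp [Matrix.mul_apply, Matrix.transpose_apply, Fin.sum_univ_two, Matrix.one_apply,
          h00, h01, h10, h11] <;> nlinarith [hpq]
    · rw [Matrix.det_fin_two, h00, h01, h10, h11]; nlinarith [hpq]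

lemma norm_mvec_SO2 {R : Mat2} (hR : R ∈ SO2) (v : E2) : ‖mvec R v‖ = ‖v‖ := by
  obtain ⟨p, q, hpq, h00, h01, h10, h11⟩ := mem_SO2_iff.mp hR
  rw [norm_mvec, normE2_eq, h00, h01, h10, h11]
  congr 1
  nlinarith [hpq]

lemma nsq1 (M : Mat2) : ‖mvec M ve1‖^2 = (M 0 0)^2 + (M 1 0)^2 := by
  rw [norm_mvec, Real.sq_sqrt (by positivity)]
  simp [ve1, toE2]

lemma nsq2 (M : Mat2) : ‖mvec M vnu‖^2 =
    (M 0 0/2 + M 0 1*Real.sqrt 3/2)^2 + (M 1 0/2 + M 1 1*Real.sqrt 3/2)^2 := by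
  rw [norm_mvec, Real.sq_sqrt (by positivity)]
  simp [vnu, toE2]
  ring

lemma nsq3 (M : Mat2) : ‖mvec M veta‖^2 =
    (-(M 0 0/2) + M 0 1*Real.sqrt 3/2)^2 + (-(M 1 0/2) + M 1 1*Real.sqrt 3/2)^2 := by
  rw [norm_mvec, Real.sq_sqrt (by positivity)]
  simp [veta, toE2]
  ring

lemma ve1_c0 : ve1 0 = 1 := rfl
lemma ve1_c1 : ve1 1 = 0 := rfl
lemma vnu_c0 : vnu 0 = 1/2 := rfl
lemma vnu_c1 : vnu 1 = Real.sqrt 3/2 := rfl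
lemma veta_c0 : veta 0 = -(1/2) := rfl
lemma veta_c1 : veta 1 = Real.sqrt 3/2 := rfl
lemma negE2_apply (v : E2) (i : Fin 2) : (-v) i = -(v i) := rfl

lemma mvec_mul (M N : Mat2) (v : E2) : mvec (M * N) v = mvec M (mvec N v) := by
  simp only [mvec, ofE2, toE2]
  rw [← Matrix.mulVec_mulVec]
  rfl

lemma mvec_neg (M : Mat2) (v : E2) : mvec M (-v) = -(mvec M v) := by
  simp only [mvec, ofE2, toE2]
  rw [show ((WithLp.equiv 2 (Fin 2 → ℝ)) (-v)) = -((WithLp.equiv 2 (Fin 2 → ℝ)) v) from rfl,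
    Matrix.mulVec_neg]
  rfl

lemma mvec_one (v : E2) : mvec 1 v = v := by
  show toE2 ((1 : Mat2).mulVec (ofE2 v)) = v
  rw [Matrix.one_mulVec]
  rfl

lemma mvec_coords {R : Mat2} {v : E2} (u : E2)
    (h0 : R 0 0 * v 0 + R 0 1 * v 1 = u 0) (h1 : R 1 0 * v 0 + R 1 1 * v 1 = u 1) :
    mvec R v = u := by
  ext i
  fin_cases i
  · rw [show ((⟨0, by norm_num⟩ : Fin 2)) = (0 : Fin 2) from rfl, mvec_apply]; exact h0
  · rw [show ((⟨1, by norm_num⟩ : Fin 2)) = (1 : Fin 2) from rfl, mvec_apply]; exact h1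

lemma norm_ve1 : ‖ve1‖ = 1 := by
  rw [normE2_eq, ve1_c0, ve1_c1]; norm_num

lemma norm_vnu : ‖vnu‖ = 1 := by
  rw [normE2_eq, vnu_c0, vnu_c1]
  rw [show ((1:ℝ)/2)^2 + (Real.sqrt 3/2)^2 = 1 by
    linear_combination (1/4) * Real.sq_sqrt (by norm_num : (0:ℝ) ≤ 3)]
  exact Real.sqrt_one

lemma norm_veta : ‖veta‖ = 1 := by
  rw [normE2_eq, veta_c0, veta_c1]
  rw [show (-((1:ℝ)/2))^2 + (Real.sqrt 3/2)^2 = 1 by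
    linear_combination (1/4) * Real.sq_sqrt (by norm_num : (0:ℝ) ≤ 3)]
  exact Real.sqrt_one

lemma one_mem_SO2 : (1 : Mat2) ∈ SO2 :=
  ⟨by rw [Matrix.transpose_one, one_mul], Matrix.det_one⟩

/-! ### Quadratic lower bound and positivity of the potentials -/

lemma psi_quad {ψ : ℝ → ℝ} (h : PsiHyp ψ) :
    ∃ δ > (0:ℝ), ∃ α > (0:ℝ), ∀ t, |t - 1| ≤ δ → α * (t-1)^2 ≤ ψ t := by
  obtain ⟨U, hUo, hU1, hC2⟩ := h.c2
  set c := iteratedDeriv 2 ψ 1 with hcdef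
  have hc : 0 < c := h.posdd
  have hψ1 : ψ 1 = 0 := (h.zero 1).mpr rfl
  have hd1 : ContDiffOn ℝ 1 (deriv ψ) U := hC2.deriv_of_isOpen hUo (by norm_num)
  have hd2cont : ContinuousOn (deriv (deriv ψ)) U := by
    have := hd1.deriv_of_isOpen (m := 0) hUo (by norm_num)
    simpa [contDiffOn_zero] using this
  have hc2eq : deriv (deriv ψ) 1 = c := by
    rw [hcdef, iteratedDeriv_succ, iteratedDeriv_one]
  have hVopen : IsOpen (U ∩ (deriv (deriv ψ)) ⁻¹' (Ioi (c/2))) :=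
    hd2cont.isOpen_inter_preimage hUo isOpen_Ioi
  have hV1 : (1:ℝ) ∈ U ∩ (deriv (deriv ψ)) ⁻¹' (Ioi (c/2)) := by
    refine ⟨hU1, ?_⟩
    simp [hc2eq]; linarith
  obtain ⟨ε, hε, hball⟩ := Metric.isOpen_iff.mp hVopen 1 hV1
  refine ⟨ε/2, by linarith, c/4, by linarith, ?_⟩
  intro t ht
  set D := Icc (1 - ε/2) (1 + ε/2) with hD
  have hDsub : D ⊆ U ∩ (deriv (deriv ψ)) ⁻¹' (Ioi (c/2)) := by
    intro x hx
    apply hball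
    rw [Real.ball_eq_Ioo]
    rcases hx with ⟨hx1, hx2⟩
    constructor <;> [linarith; linarith]
  have hDU : D ⊆ U := fun x hx => (hDsub hx).1
  set g : ℝ → ℝ := fun t => ψ t - c/4 * (t - 1)^2 with hg
  have hpolyd : ∀ x : ℝ, HasDerivAt (fun t : ℝ => c/4 * (t-1)^2) (c/4 * (2*(x-1))) x := by
    intro x
    have := ((hasDerivAt_id x).sub_const 1).pow 2
    simpa using (this.const_mul (c/4))
  have hψdiff : ∀ x ∈ U, DifferentiableAt ℝ ψ x := by
    intro x hx
    exact ((hC2.differentiableOn (by norm_num)) x hx).differentiableAt (hUo.mem_nhds hx)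
  have hgd : ∀ x ∈ U, deriv g x = deriv ψ x - c/4 * (2*(x-1)) := by
    intro x hx
    rw [hg]
    rw [deriv_fun_sub (hψdiff x hx) (hpolyd x).differentiableAt, (hpolyd x).deriv]
  have hg'diff : ∀ x ∈ U, DifferentiableAt ℝ (deriv ψ) x := by
    intro x hx
    exact ((hd1.differentiableOn (by norm_num)) x hx).differentiableAt (hUo.mem_nhds hx)
  have hconv : ConvexOn ℝ D g := by
    apply convexOn_of_deriv2_nonneg (convex_Icc _ _)
    · exact (h.cont.sub (by continuity)).continuousOn
    · intro x hx
      have hxU : x ∈ U := hDU (interior_subset hx)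
      exact ((hψdiff x hxU).sub (hpolyd x).differentiableAt).differentiableWithinAt
    · intro x hx
      have hxU : x ∈ U := hDU (interior_subset hx)
      have hdf : DifferentiableAt ℝ (fun y => deriv ψ y - c/4 * (2*(y-1))) x := by
        apply (hg'diff x hxU).sub
        exact (((hasDerivAt_id x).sub_const 1).const_mul 2 |>.const_mul (c/4)).differentiableAt
      have heq : (fun y => deriv g y) =ᶠ[nhds x] (fun y => deriv ψ y - c/4 * (2*(y-1))) := by
        filter_upwards [hUo.mem_nhds hxU] with y hy using hgd y hy
      exact (hdf.congr_of_eventuallyEq heq).differentiableWithinAt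
    · intro x hx
      have hxU : x ∈ U := hDU (interior_subset hx)
      have hxV : deriv (deriv ψ) x > c/2 := (hDsub (interior_subset hx)).2
      have heq : (fun y => deriv g y) =ᶠ[nhds x] (fun y => deriv ψ y - c/4 * (2*(y-1))) := by
        filter_upwards [hUo.mem_nhds hxU] with y hy using hgd y hy
      show 0 ≤ deriv^[2] g x
      have hit : deriv^[2] g x = deriv (deriv g) x := by
        simp [Function.iterate_succ, Function.iterate_one]
      rw [hit]
      rw [Filter.EventuallyEq.deriv_eq heq]
      have h2 : HasDerivAt (fun y : ℝ => c/4 * (2*(y-1))) (c/2) x := by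
        have := (((hasDerivAt_id x).sub_const 1).const_mul (2:ℝ)).const_mul (c/4)
        exact this.congr_deriv (by ring)
      rw [deriv_fun_sub (hg'diff x hxU) h2.differentiableAt, h2.deriv]
      linarith
  have hmin : IsLocalMin ψ 1 := by
    apply Filter.Eventually.of_forall
    intro y; rw [hψ1]; exact h.nonneg y
  have hder1 : deriv ψ 1 = 0 := hmin.deriv_eq_zero
  have hg1 : g 1 = 0 := by simp [hg, hψ1]
  have hgd1 : deriv g 1 = 0 := by rw [hgd 1 hU1, hder1]; ring
  have hgdiff1 : DifferentiableAt ℝ g 1 := (hψdiff 1 hU1).sub (hpolyd 1).differentiableAt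
  have h1D : (1:ℝ) ∈ D := by constructor <;> simp <;> linarith
  have htD : t ∈ D := by
    rw [hD]; rw [abs_le] at ht; constructor <;> linarith [ht.1, ht.2]
  have hgt : 0 ≤ g t := by
    rcases lt_trichotomy t 1 with hlt | heqt | hgt'
    · have := hconv.slope_le_deriv htD h1D hlt hgdiff1
      rw [hgd1, slope_def_field] at this
      have h10 : (0:ℝ) < 1 - t := by linarith
      rw [div_le_iff₀ h10] at this
      linarith [this]
    · rw [heqt, hg1]
    · have := hconv.deriv_le_slope h1D htD hgt' hgdiff1
      rw [hgd1, slope_def_field] at this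
      have h10 : (0:ℝ) < t - 1 := by linarith
      rw [le_div_iff₀ h10] at this
      linarith [this]
  simpa [hg] using hgt

lemma psi_min {ψ : ℝ → ℝ} (h : PsiHyp ψ) (K δ : ℝ) (hδ : 0 < δ) :
    ∃ ε > (0:ℝ), ∀ t, |t| ≤ K → δ ≤ |t - 1| → ε ≤ ψ t := by
  set S : Set ℝ := {t | |t| ≤ K ∧ δ ≤ |t - 1|} with hS
  have hclosed : IsClosed S := by
    have h1 : IsClosed {t : ℝ | |t| ≤ K} := isClosed_le (by continuity) continuous_const
    have h2 : IsClosed {t : ℝ | δ ≤ |t - 1|} := isClosed_le continuous_const (by continuity)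
    exact h1.inter h2
  have hcomp : IsCompact S := by
    apply (isCompact_Icc (a := -K) (b := K)).of_isClosed_subset hclosed
    intro x hx
    rcases hx with ⟨h1, _⟩
    rw [abs_le] at h1
    exact h1
  by_cases hne : S.Nonempty
  · obtain ⟨t₀, ht₀, hmin⟩ := hcomp.exists_isMinOn hne h.cont.continuousOn
    refine ⟨ψ t₀, ?_, fun t h1 h2 => hmin ⟨h1, h2⟩⟩
    rcases (h.nonneg t₀).lt_or_eq with hlt | heq
    · exact hlt
    · exfalso
      have ht1 : t₀ = 1 := (h.zero t₀).mp heq.symm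
      have h2 := ht₀.2
      rw [ht1] at h2
      simp at h2
      linarith
  · exact ⟨1, one_pos, fun t h1 h2 => absurd ⟨h1, h2⟩ (fun hh => hne ⟨t, hh⟩)⟩

/-! ### Rigidity estimates -/

lemma sigma_sq {σ : ℝ} (h : 0 ≤ σ) : (σ - 1)^2 ≤ (σ^2 - 1)^2 := by
  nlinarith [mul_nonneg (mul_nonneg (sq_nonneg (σ-1)) h) (by linarith : (0:ℝ) ≤ σ + 2)]

lemma nsq_bound {n : ℝ} (h0 : 0 ≤ n) (hl : |n - 1| ≤ 1/2) :
    (n^2 - 1)^2 ≤ (25/4)*(n-1)^2 := by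
  obtain ⟨hl1, hl2⟩ := abs_le.mp hl
  nlinarith [mul_nonneg (sq_nonneg (n-1)) (by nlinarith : (0:ℝ) ≤ 25/4 - (n+1)^2)]

lemma u_bound (u1 u2 u3 t1 t2 t3 : ℝ)
    (b1 : u1^2 ≤ (25/4)*t1^2) (b2 : u2^2 ≤ (25/4)*t2^2) (b3 : u3^2 ≤ (25/4)*t3^2) :
    u1^2 + (2/3)*(u2-u3)^2 + ((2*u2+2*u3-u1)/3)^2 ≤ 25*(t1^2+t2^2+t3^2) := by
  nlinarith [sq_nonneg (u2+u3), sq_nonneg (u2-u3), sq_nonneg (2*(u2+u3)+u1),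
    sq_nonneg u1, sq_nonneg u2, sq_nonneg u3]

lemma rigid_geom (a b c d : ℝ) (hd : 1/2 ≤ a*d - b*c) :
    ∃ p q : ℝ, p^2 + q^2 = 1 ∧
      (a-p)^2 + (b+q)^2 + (c-q)^2 + (d-p)^2
        ≤ ((a^2+c^2) - 1)^2 + 2*(a*b+c*d)^2 + ((b^2+d^2) - 1)^2 := by
  set s := Real.sqrt ((a+d)^2 + (b-c)^2) with hsd
  set r := Real.sqrt ((a-d)^2 + (b+c)^2) with hrd
  have hs2 : s^2 = a^2+b^2+c^2+d^2 + 2*(a*d - b*c) := by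
    rw [hsd, Real.sq_sqrt (by positivity)]; ring
  have hr2 : r^2 = a^2+b^2+c^2+d^2 - 2*(a*d - b*c) := by
    rw [hrd, Real.sq_sqrt (by positivity)]; ring
  have hs0 : 0 ≤ s := Real.sqrt_nonneg _
  have hr0 : 0 ≤ r := Real.sqrt_nonneg _
  have hs1 : 1 ≤ s := by
    have h2s : (1:ℝ) ≤ (a+d)^2+(b-c)^2 := by nlinarith [sq_nonneg (a-d), sq_nonneg (b+c)]
    have := Real.sqrt_le_sqrt h2s
    rwa [Real.sqrt_one] at this
  have hsr : r ≤ s := by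
    rw [hsd, hrd]
    apply Real.sqrt_le_sqrt
    nlinarith
  have hsne : s ≠ 0 := by linarith
  refine ⟨(a+d)/s, (c-b)/s, by field_simp; linear_combination -hs2, ?_⟩
  have hinner : ((a+d)/s)*(a+d) + ((c-b)/s)*(c-b) = s := by
    field_simp
    linear_combination -hs2
  have hpq : ((a+d)/s)^2 + ((c-b)/s)^2 = 1 := by field_simp; linear_combination -hs2
  have hL : (a-(a+d)/s)^2 + (b+(c-b)/s)^2 + (c-(c-b)/s)^2 + (d-(a+d)/s)^2
      = a^2+b^2+c^2+d^2 - 2*s + 2 := by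
    linear_combination (-2)*hinner + 2*hpq
  rw [hL]
  have key1 : a^2+b^2+c^2+d^2 - 2*s + 2 = ((s+r)/2 - 1)^2 + ((s-r)/2 - 1)^2 := by
    linear_combination (-1/2)*hs2 + (-1/2)*hr2
  rw [key1]
  have k2a := sigma_sq (by linarith : 0 ≤ (s+r)/2)
  have k2b := sigma_sq (by linarith : 0 ≤ (s-r)/2)
  have e2 : (((s+r)/2)^2 - 1)^2 + (((s-r)/2)^2 - 1)^2
      = ((a^2+c^2) - 1)^2 + 2*(a*b+c*d)^2 + ((b^2+d^2) - 1)^2 := by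
    have e1 : (((s+r)/2)^2 - 1)^2 + (((s-r)/2)^2 - 1)^2
        = 2*((s^2+r^2)/4 - 1)^2 + s^2*r^2/2 := by ring
    rw [e1, hs2, hr2]; ring
  linarith

lemma rigid_aux (a b c d n1 n2 n3 w : ℝ) (hw : w^2 = 3)
    (hn1 : n1^2 = a^2+c^2) (hn2 : n2^2 = (a/2+b*w/2)^2 + (c/2+d*w/2)^2)
    (hn3 : n3^2 = (-(a/2)+b*w/2)^2+(-(c/2)+d*w/2)^2)
    (hn1p : 0 ≤ n1) (hn2p : 0 ≤ n2) (hn3p : 0 ≤ n3)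
    (h1 : |n1 - 1| ≤ 1/2) (h2 : |n2 - 1| ≤ 1/2) (h3 : |n3 - 1| ≤ 1/2)
    (hd : 1/2 ≤ a*d - b*c) :
    ∃ p q : ℝ, p^2 + q^2 = 1 ∧
      (a-p)^2 + (b+q)^2 + (c-q)^2 + (d-p)^2 ≤ 25*((n1-1)^2+(n2-1)^2+(n3-1)^2) := by
  obtain ⟨p, q, hpq, hle⟩ := rigid_geom a b c d hd
  refine ⟨p, q, hpq, hle.trans ?_⟩
  have hsub : n2^2 - n3^2 = w*(a*b+c*d) := by linear_combination hn2 - hn3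
  have hab : 3*(a*b+c*d)^2 = ((n2^2-1) - (n3^2-1))^2 := by
    linear_combination (-(n2^2-n3^2) - w*(a*b+c*d))*hsub + (-(a*b+c*d)^2)*hw
  have hbd : b^2 + d^2 - 1 = (2*(n2^2-1) + 2*(n3^2-1) - (n1^2-1))/3 := by
    linear_combination (-2/3)*hn2 + (-2/3)*hn3 + (1/3)*hn1 + (-(b^2+d^2)/3)*hw
  have e3 : ((a^2+c^2) - 1)^2 + 2*(a*b+c*d)^2 + ((b^2+d^2) - 1)^2
      = (n1^2-1)^2 + (2/3)*((n2^2-1)-(n3^2-1))^2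
        + ((2*(n2^2-1)+2*(n3^2-1)-(n1^2-1))/3)^2 := by
    linear_combination (-(a^2+c^2-1+n1^2-1))*hn1 + (2/3)*hab
      + (b^2+d^2-1+(2*(n2^2-1)+2*(n3^2-1)-(n1^2-1))/3)*hbd
  rw [e3]
  exact u_bound _ _ _ _ _ _ (nsq_bound hn1p h1) (nsq_bound hn2p h2) (nsq_bound hn3p h3)

lemma rigidity (M : Mat2)
    (h1 : |‖mvec M ve1‖ - 1| ≤ 1/2) (h2 : |‖mvec M vnu‖ - 1| ≤ 1/2)
    (h3 : |‖mvec M veta‖ - 1| ≤ 1/2) (hd : 1/2 ≤ M.det) :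
    distSO2 M ^ 2 ≤
      25 * ((‖mvec M ve1‖-1)^2 + (‖mvec M vnu‖-1)^2 + (‖mvec M veta‖-1)^2) := by
  have hw : Real.sqrt 3 ^ 2 = 3 := Real.sq_sqrt (by norm_num)
  rw [Matrix.det_fin_two] at hd
  obtain ⟨p, q, hpq, hle⟩ := rigid_aux (M 0 0) (M 0 1) (M 1 0) (M 1 1)
    (‖mvec M ve1‖) (‖mvec M vnu‖) (‖mvec M veta‖) (Real.sqrt 3) hw
    (nsq1 M) (nsq2 M) (nsq3 M) (norm_nonneg _) (norm_nonneg _) (norm_nonneg _)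
    h1 h2 h3 hd
  set R : Mat2 := Matrix.of ![![p, -q], ![q, p]] with hRd
  have hRmem : R ∈ SO2 := mem_SO2_iff.mpr ⟨p, q, hpq, rfl, rfl, rfl, rfl⟩
  have hd1 : distSO2 M ≤ ‖M - R‖ := by
    rw [← dist_eq_norm]
    exact Metric.infDist_le_dist_of_mem hRmem
  have h0 : 0 ≤ distSO2 M := Metric.infDist_nonneg
  have hsq : distSO2 M ^ 2 ≤ ‖M - R‖^2 := by
    exact pow_le_pow_left₀ h0 hd1 2
  have hMR : ‖M - R‖^2
      = (M 0 0 - p)^2 + (M 0 1 + q)^2 + (M 1 0 - q)^2 + (M 1 1 - p)^2 := by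
    rw [norm_mat_sq]
    simp [Matrix.sub_apply, hRd]
    try ring
  rw [hMR] at hsq
  linarith

/-! ### Smoothness helpers -/

def mvecL (v : E2) : Mat2 →ₗ[ℝ] E2 where
  toFun M := mvec M v
  map_add' M N := by
    ext i
    show (M + N).mulVec (ofE2 v) i = M.mulVec (ofE2 v) i + N.mulVec (ofE2 v) i
    rw [Matrix.add_mulVec]; rfl
  map_smul' cc M := by
    ext i
    show (cc • M).mulVec (ofE2 v) i = cc • (M.mulVec (ofE2 v)) i
    rw [Matrix.smul_mulVec]; rfl

lemma contDiff_mvec (v : E2) : ContDiff ℝ 2 (fun M : Mat2 => mvec M v) :=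
  (mvecL v).toContinuousLinearMap.contDiff

lemma contDiff_norm_mvec (v : E2) {M : Mat2} (h : mvec M v ≠ 0) :
    ContDiffAt ℝ 2 (fun N : Mat2 => ‖mvec N v‖) M :=
  ContDiffAt.norm ℝ ((contDiff_mvec v).contDiffAt) h

lemma contDiff_det : ContDiff ℝ 2 (fun M : Mat2 => M.det) := by
  have hdet : (fun M : Mat2 => M.det) = fun M : Mat2 => M 0 0 * M 1 1 - M 0 1 * M 1 0 := by
    funext M; rw [Matrix.det_fin_two]
  rw [hdet]
  have he : ∀ i j : Fin 2, ContDiff ℝ 2 (fun M : Mat2 => M i j) := by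
    intro i j
    have hc : ContDiff ℝ 2 (fun M : Mat2 => mvec M (EuclideanSpace.single j 1) i) := by
      exact (EuclideanSpace.proj i).contDiff.comp (contDiff_mvec _)
    convert hc using 2 with M
    show M i j = (M.mulVec (ofE2 (EuclideanSpace.single j 1))) i
    fin_cases j <;>
      simp [Matrix.mulVec, dotProduct, Fin.sum_univ_two, ofE2,
        EuclideanSpace.single_apply]
  exact ((he 0 0).mul (he 1 1)).sub ((he 0 1).mul (he 1 0))

/-! ### Arithmetic helpers for the coercivity estimate -/

lemma caseA_arith (q3 ag bg x d2 W : ℝ) (hq3 : 0 < q3) (hag : 0 < ag) (hbg : 0 < bg)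
    (hbig : (3*bg+ag)/ag + 1 ≤ x) (hdb : d2 ≤ 2*x+4)
    (hW : q3*(ag*((3/2)*x) - 3*bg) ≤ W) : q3*ag/4*d2 ≤ W := by
  have h1 : (3*bg+ag) ≤ (x-1)*ag := (div_le_iff₀ hag).mp (by linarith)
  have h2 : q3*ag/4*d2 ≤ q3*ag/4*(2*x+4) :=
    mul_le_mul_of_nonneg_left hdb (by positivity)
  have h3 : ag/4*(2*x+4) ≤ ag*((3/2)*x) - 3*bg := by nlinarith
  nlinarith [mul_le_mul_of_nonneg_left h3 hq3.le]

lemma caseB_arith (q3 α d2 S W : ℝ) (hq3 : 0 < q3) (hα : 0 < α)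
    (hd : d2 ≤ 25*S) (hWS : q3*(α*S) ≤ W) : q3*α/25*d2 ≤ W := by
  nlinarith [mul_le_mul_of_nonneg_left hd (by positivity : (0:ℝ) ≤ q3*α/25)]

lemma caseC_arith (q3 ε K2 d2 W : ℝ) (hq3 : 0 < q3) (hε : 0 < ε) (hK2 : 0 < K2)
    (hd : d2 ≤ 2*K2+4) (hW : q3*ε ≤ W) : q3*ε/(2*K2+4)*d2 ≤ W := by
  have h : q3*ε/(2*K2+4)*d2 ≤ q3*ε/(2*K2+4)*(2*K2+4) :=
    mul_le_mul_of_nonneg_left hd (by positivity)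
  have he : q3*ε/(2*K2+4)*(2*K2+4) = q3*ε := by field_simp
  linarith

lemma sq_le_lin_bound {n K : ℝ} (h : n^2 ≤ K) : n ≤ 1 + K := by
  nlinarith [sq_nonneg (n - 1/2)]

lemma det_abs_bound (a b c d : ℝ) : |a*d - b*c| ≤ (a^2+b^2+c^2+d^2)/2 := by
  rw [abs_le]
  constructor
  · nlinarith [sq_nonneg (a+d), sq_nonneg (b-c)]
  · nlinarith [sq_nonneg (a-d), sq_nonneg (b+c)]

lemma dist_sq_lin (a b c d D : ℝ) (h2 : D ≤ (a-1)^2 + b^2 + c^2 + (d-1)^2) :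
    D ≤ 2*(a^2+b^2+c^2+d^2) + 4 := by
  nlinarith [sq_nonneg (a+1), sq_nonneg (d+1)]

lemma growth_sum (ag bg x n1 n2 n3 p1 p2 p3 : ℝ)
    (hg1 : ag * n1 ^ 2 - bg ≤ p1) (hg2 : ag * n2 ^ 2 - bg ≤ p2)
    (hg3 : ag * n3 ^ 2 - bg ≤ p3) (hs : n1^2 + n2^2 + n3^2 = (3/2)*x)
    (hag : 0 < ag) :
    ag*((3/2)*x) - 3*bg ≤ p1 + p2 + p3 := by
  have : ag*((3/2)*x) = ag*n1^2 + ag*n2^2 + ag*n3^2 := by rw [← hs]; ring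
  linarith

lemma nsq_le_third (n1 n2 n3 x K : ℝ) (hs : n1^2 + n2^2 + n3^2 = (3/2)*x)
    (hx : x < K) (h2 : 0 ≤ n2^2) (h3 : 0 ≤ n3^2) : n1^2 ≤ (3/2)*K := by
  nlinarith

end WpsiHelpers

/-- properties of the discrete-to-continuum energy density `W`. -/
theorem Wpsi_properties
    (ψ₁ ψ₂ : ℝ → ℝ) (hψ₁ : PsiHyp ψ₁) (hψ₂ : PsiHyp ψ₂)
    (hgrow : ∃ a > 0, ∃ b > 0, ∀ t : ℝ, 0 ≤ t → a * t ^ 2 - b ≤ ψ₁ t) :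
    Wpsi ψ₁ ψ₂ 1 = 0 ∧
    (∀ M : Mat2, ∀ R ∈ SO2, Wpsi ψ₁ ψ₂ (R * M) = Wpsi ψ₁ ψ₂ M) ∧
    (∀ M : Mat2, ∀ R ∈ ILat {ve1, vnu}, Wpsi ψ₁ ψ₂ (M * R) = Wpsi ψ₁ ψ₂ M) ∧
    (∃ c > 0, ∀ M, c * distSO2 M ^ 2 ≤ Wpsi ψ₁ ψ₂ M) ∧
    (∃ U : Set Mat2, IsOpen U ∧ SO2 ⊆ U ∧ ContDiffOn ℝ 2 (Wpsi ψ₁ ψ₂) U) := by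
  obtain ⟨ag, hag, bg, hbg, hgr⟩ := hgrow
  have hψ₁0 : ψ₁ 1 = 0 := (hψ₁.zero 1).mpr rfl
  have hψ₂0 : ψ₂ 1 = 0 := (hψ₂.zero 1).mpr rfl
  have hw : Real.sqrt 3 ^ 2 = 3 := Real.sq_sqrt (by norm_num)
  have hwpos : (0:ℝ) < Real.sqrt 3 := Real.sqrt_pos.mpr (by norm_num)
  have hwne : Real.sqrt 3 ≠ 0 := ne_of_gt hwpos
  refine ⟨?_, ?_, ?_, ?_, ?_⟩
  · -- (i) W(Id) = 0
    unfold Wpsi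
    rw [mvec_one, mvec_one, mvec_one, norm_ve1, norm_vnu, norm_veta, Matrix.det_one,
      hψ₁0, hψ₂0]
    norm_num
  · -- (ii) left SO(2)-invariance
    intro M R hR
    have hdet : (R * M).det = M.det := by rw [Matrix.det_mul, hR.2, one_mul]
    unfold Wpsi
    rw [mvec_mul, mvec_mul, mvec_mul, norm_mvec_SO2 hR, norm_mvec_SO2 hR,
      norm_mvec_SO2 hR, hdet]
  · -- (iii) right I(𝕋)-invariance
    intro M R hRI
    obtain ⟨hRSO, hlatt⟩ := hRI
    obtain ⟨p, q, hpq, h00, h01, h10, h11⟩ := mem_SO2_iff.mp hRSO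
    have hdet : (M * R).det = M.det := by rw [Matrix.det_mul, hRSO.2, mul_one]
    have hve1mem : mvec R ve1 ∈ latt {ve1, vnu} := by
      rw [← hlatt]
      exact Set.mem_image_of_mem _ (AddSubgroup.subset_closure (by simp))
    rw [latt] at hve1mem
    obtain ⟨m, n, hmn⟩ := (AddSubgroup.mem_closure_pair).mp hve1mem
    have h0 : mvec R ve1 0 = (m • ve1 + n • vnu) 0 := by rw [hmn]
    have h1 : mvec R ve1 1 = (m • ve1 + n • vnu) 1 := by rw [hmn]
    rw [mvec_apply, h00, h01, ve1_c0, ve1_c1] at h0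
    rw [mvec_apply, h10, h11, ve1_c0, ve1_c1] at h1
    have hsm : ∀ (k l : ℤ) (i : Fin 2), ((k • ve1 + l • vnu) : E2) i
        = (k:ℝ) * ve1 i + (l:ℝ) * vnu i := by intro k l i; simp
    rw [hsm, ve1_c0, vnu_c0] at h0
    rw [hsm, ve1_c1, vnu_c1] at h1
    have hp2 : p = (m:ℝ) + (n:ℝ) * (1/2) := by linear_combination h0
    have hq2 : q = (n:ℝ) * (Real.sqrt 3/2) := by linear_combination h1
    rw [hp2, hq2] at hpq
    have hZR : ((m:ℝ))^2 + (m:ℝ)*(n:ℝ) + (n:ℝ)^2 = 1 := by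
      linear_combination hpq - ((n:ℝ)^2/4) * hw
    have hZ : m^2 + m*n + n^2 = 1 := by exact_mod_cast hZR
    have hfin : ∀ u v z : E2, mvec R ve1 = u → mvec R vnu = v → mvec R veta = z →
        ψ₁ ‖mvec M u‖ + ψ₁ ‖mvec M v‖ + ψ₁ ‖mvec M z‖
          = ψ₁ ‖mvec M ve1‖ + ψ₁ ‖mvec M vnu‖ + ψ₁ ‖mvec M veta‖ →
        Wpsi ψ₁ ψ₂ (M * R) = Wpsi ψ₁ ψ₂ M := by
      intro u v z hu hv hz hsum
      unfold Wpsi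
      rw [mvec_mul, mvec_mul, mvec_mul, hu, hv, hz, hdet, hsum]
    have hc6 : (m=1∧n=0) ∨ (m=-1∧n=0) ∨ (m=0∧n=1) ∨ (m=0∧n=-1)
        ∨ (m=1∧n=-1) ∨ (m=-1∧n=1) := by
      have hn2 : n^2 ≤ 1 := by nlinarith [sq_nonneg (2*m+n)]
      have hm2 : m^2 ≤ 1 := by nlinarith [sq_nonneg (m+2*n)]
      have hnb1 : -1 ≤ n := by nlinarith
      have hnb2 : n ≤ 1 := by nlinarith
      have hmb1 : -1 ≤ m := by nlinarith
      have hmb2 : m ≤ 1 := by nlinarith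
      interval_cases m <;> interval_cases n <;> omega
    rcases hc6 with ⟨hm,hn⟩|⟨hm,hn⟩|⟨hm,hn⟩|⟨hm,hn⟩|⟨hm,hn⟩|⟨hm,hn⟩ <;>
      subst hm <;> subst hn
    · -- (1,0) : identity
      have hp3 : p = 1 := by rw [hp2]; norm_num
      have hq3 : q = 0 := by rw [hq2]; norm_num
      refine hfin ve1 vnu veta ?_ ?_ ?_ (by ring)
      · exact mvec_coords _ (by rw [h00, h01, hp3, hq3, ve1_c0, ve1_c1]; ring)
          (by rw [h10, h11, hp3, hq3, ve1_c0, ve1_c1]; ring)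
      · exact mvec_coords _ (by rw [h00, h01, hp3, hq3, vnu_c0, vnu_c1]; ring)
          (by rw [h10, h11, hp3, hq3, vnu_c0, vnu_c1]; ring)
      · exact mvec_coords _ (by rw [h00, h01, hp3, hq3, veta_c0, veta_c1]; ring)
          (by rw [h10, h11, hp3, hq3, veta_c0, veta_c1]; ring)
    · -- (-1,0) : minus identity
      have hp3 : p = -1 := by rw [hp2]; norm_num
      have hq3 : q = 0 := by rw [hq2]; norm_num
      refine hfin (-ve1) (-vnu) (-veta) ?_ ?_ ?_
        (by rw [mvec_neg, mvec_neg, mvec_neg, norm_neg, norm_neg, norm_neg])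
      · exact mvec_coords _
          (by rw [h00, h01, hp3, hq3, negE2_apply, ve1_c0, ve1_c1]; ring)
          (by rw [h10, h11, hp3, hq3, negE2_apply, ve1_c0, ve1_c1]; ring)
      · exact mvec_coords _
          (by rw [h00, h01, hp3, hq3, negE2_apply, vnu_c0, vnu_c1]; ring)
          (by rw [h10, h11, hp3, hq3, negE2_apply, vnu_c0, vnu_c1]; ring)
      · exact mvec_coords _
          (by rw [h00, h01, hp3, hq3, negE2_apply, veta_c0, veta_c1]; ring)
          (by rw [h10, h11, hp3, hq3, negE2_apply, veta_c0, veta_c1]; ring)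
    · -- (0,1) : rotation by 60°
      have hp3 : p = 1/2 := by rw [hp2]; norm_num
      have hq3 : q = Real.sqrt 3/2 := by rw [hq2]; norm_num
      refine hfin vnu veta (-ve1) ?_ ?_ ?_
        (by rw [mvec_neg, norm_neg]; ring)
      · exact mvec_coords _ (by rw [h00, h01, hp3, hq3, ve1_c0, ve1_c1, vnu_c0]; ring)
          (by rw [h10, h11, hp3, hq3, ve1_c0, ve1_c1, vnu_c1]; ring)
      · exact mvec_coords _
          (by rw [h00, h01, hp3, hq3, vnu_c0, vnu_c1, veta_c0]
              linear_combination (-1/4)*hw)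
          (by rw [h10, h11, hp3, hq3, vnu_c0, vnu_c1, veta_c1]; ring)
      · exact mvec_coords _
          (by rw [h00, h01, hp3, hq3, veta_c0, veta_c1, negE2_apply, ve1_c0]
              linear_combination (-1/4)*hw)
          (by rw [h10, h11, hp3, hq3, veta_c0, veta_c1, negE2_apply, ve1_c1]; ring)
    · -- (0,-1) : rotation by -120°... (cos,sin) = (-1/2,-√3/2)
      have hp3 : p = -(1/2) := by rw [hp2]; norm_num
      have hq3 : q = -(Real.sqrt 3/2) := by rw [hq2]; push_cast; ring
      refine hfin (-vnu) (-veta) ve1 ?_ ?_ ?_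
        (by rw [mvec_neg, mvec_neg, norm_neg, norm_neg]; ring)
      · exact mvec_coords _
          (by rw [h00, h01, hp3, hq3, ve1_c0, ve1_c1, negE2_apply, vnu_c0]; ring)
          (by rw [h10, h11, hp3, hq3, ve1_c0, ve1_c1, negE2_apply, vnu_c1]; ring)
      · exact mvec_coords _
          (by rw [h00, h01, hp3, hq3, vnu_c0, vnu_c1, negE2_apply, veta_c0]
              linear_combination (1/4)*hw)
          (by rw [h10, h11, hp3, hq3, vnu_c0, vnu_c1, negE2_apply, veta_c1]; ring)
      · exact mvec_coords _
          (by rw [h00, h01, hp3, hq3, veta_c0, veta_c1, ve1_c0]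
              linear_combination (1/4)*hw)
          (by rw [h10, h11, hp3, hq3, veta_c0, veta_c1, ve1_c1]; ring)
    · -- (1,-1) : rotation by -60°
      have hp3 : p = 1/2 := by rw [hp2]; push_cast; ring
      have hq3 : q = -(Real.sqrt 3/2) := by rw [hq2]; push_cast; ring
      refine hfin (-veta) ve1 vnu ?_ ?_ ?_
        (by rw [mvec_neg, norm_neg]; ring)
      · exact mvec_coords _
          (by rw [h00, h01, hp3, hq3, ve1_c0, ve1_c1, negE2_apply, veta_c0]; ring)
          (by rw [h10, h11, hp3, hq3, ve1_c0, ve1_c1, negE2_apply, veta_c1]; ring)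
      · exact mvec_coords _
          (by rw [h00, h01, hp3, hq3, vnu_c0, vnu_c1, ve1_c0]
              linear_combination (1/4)*hw)
          (by rw [h10, h11, hp3, hq3, vnu_c0, vnu_c1, ve1_c1]; ring)
      · exact mvec_coords _
          (by rw [h00, h01, hp3, hq3, veta_c0, veta_c1, vnu_c0]
              linear_combination (1/4)*hw)
          (by rw [h10, h11, hp3, hq3, veta_c0, veta_c1, vnu_c1]; ring)
    · -- (-1,1) : rotation by 120°
      have hp3 : p = -(1/2) := by rw [hp2]; push_cast; ring
      have hq3 : q = Real.sqrt 3/2 := by rw [hq2]; norm_num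
      refine hfin veta (-ve1) (-vnu) ?_ ?_ ?_
        (by rw [mvec_neg, mvec_neg, norm_neg, norm_neg]; ring)
      · exact mvec_coords _
          (by rw [h00, h01, hp3, hq3, ve1_c0, ve1_c1, veta_c0]; ring)
          (by rw [h10, h11, hp3, hq3, ve1_c0, ve1_c1, veta_c1]; ring)
      · exact mvec_coords _
          (by rw [h00, h01, hp3, hq3, vnu_c0, vnu_c1, negE2_apply, ve1_c0]
              linear_combination (-1/4)*hw)
          (by rw [h10, h11, hp3, hq3, vnu_c0, vnu_c1, negE2_apply, ve1_c1]; ring)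
      · exact mvec_coords _
          (by rw [h00, h01, hp3, hq3, veta_c0, veta_c1, negE2_apply, vnu_c0]
              linear_combination (-1/4)*hw)
          (by rw [h10, h11, hp3, hq3, veta_c0, veta_c1, negE2_apply, vnu_c1]; ring)
  · -- (iv) coercivity
    obtain ⟨δ₁, hδ₁, α₁, hα₁, hq1⟩ := psi_quad hψ₁
    obtain ⟨δ, hδdef⟩ : ∃ d : ℝ, d = min δ₁ (1/2) := ⟨_, rfl⟩
    have hδpos : (0:ℝ) < δ := by rw [hδdef]; exact lt_min hδ₁ (by norm_num)
    have hδ1' : δ ≤ δ₁ := by rw [hδdef]; exact min_le_left _ _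
    have hδ2 : δ ≤ 1/2 := by rw [hδdef]; exact min_le_right _ _
    obtain ⟨K2, hK2def⟩ : ∃ K : ℝ, K = (3*bg+ag)/ag + 1 := ⟨_, rfl⟩
    have hK2pos : 0 < K2 := by
      rw [hK2def]
      have h := div_nonneg (by linarith : (0:ℝ) ≤ 3*bg+ag) hag.le
      linarith
    obtain ⟨ε₁, hε₁, hmin₁⟩ := psi_min hψ₁ (1 + (3/2)*K2) δ hδpos
    obtain ⟨ε₂, hε₂, hmin₂⟩ := psi_min hψ₂ K2 (1/2) (by norm_num)
    obtain ⟨q3, hq3def⟩ : ∃ q : ℝ, q = 2/Real.sqrt 3 := ⟨_, rfl⟩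
    have hq3pos : 0 < q3 := by rw [hq3def]; positivity
    obtain ⟨εm, hεmdef⟩ : ∃ e : ℝ, e = min ε₁ ε₂ := ⟨_, rfl⟩
    have hεmpos : 0 < εm := by rw [hεmdef]; exact lt_min hε₁ hε₂
    have hεm1 : εm ≤ ε₁ := by rw [hεmdef]; exact min_le_left _ _
    have hεm2 : εm ≤ ε₂ := by rw [hεmdef]; exact min_le_right _ _
    refine ⟨min (q3*ag/4) (min (q3*α₁/25) (q3*εm/(2*K2+4))), ?_, ?_⟩
    · refine lt_min ?_ (lt_min ?_ ?_)
      · exact div_pos (mul_pos hq3pos hag) (by norm_num)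
      · exact div_pos (mul_pos hq3pos hα₁) (by norm_num)
      · exact div_pos (mul_pos hq3pos hεmpos) (by linarith)
    · intro M
      have h0d : 0 ≤ distSO2 M ^ 2 := sq_nonneg _
      have hkey : Wpsi ψ₁ ψ₂ M = q3*ψ₁ ‖mvec M ve1‖ + q3*ψ₁ ‖mvec M vnu‖
          + q3*ψ₁ ‖mvec M veta‖ + 6*(q3*ψ₂ M.det) := by
        unfold Wpsi
        rw [hq3def]
        field_simp
        ring
      have t1 : 0 ≤ q3*ψ₁ ‖mvec M ve1‖ := mul_nonneg hq3pos.le (hψ₁.nonneg _)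
      have t2 : 0 ≤ q3*ψ₁ ‖mvec M vnu‖ := mul_nonneg hq3pos.le (hψ₁.nonneg _)
      have t3 : 0 ≤ q3*ψ₁ ‖mvec M veta‖ := mul_nonneg hq3pos.le (hψ₁.nonneg _)
      have t4 : 0 ≤ q3*ψ₂ M.det := mul_nonneg hq3pos.le (hψ₂.nonneg _)
      have hsumsq : ‖mvec M ve1‖^2 + ‖mvec M vnu‖^2 + ‖mvec M veta‖^2
          = (3/2)*(M 0 0^2 + M 0 1^2 + M 1 0^2 + M 1 1^2) := by
        rw [nsq1, nsq2, nsq3]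
        linear_combination ((M 0 1^2 + M 1 1^2)/2) * hw
      have hdabs : |M.det| ≤ (M 0 0^2 + M 0 1^2 + M 1 0^2 + M 1 1^2)/2 := by
        rw [Matrix.det_fin_two]
        exact det_abs_bound _ _ _ _
      have hdistb : distSO2 M^2 ≤ 2*(M 0 0^2 + M 0 1^2 + M 1 0^2 + M 1 1^2) + 4 := by
        have hd1 : distSO2 M ≤ ‖M - 1‖ := by
          rw [← dist_eq_norm]
          exact Metric.infDist_le_dist_of_mem one_mem_SO2
        have h2 : distSO2 M^2 ≤ ‖M-1‖^2 := pow_le_pow_left₀ Metric.infDist_nonneg hd1 2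
        have h3 : ‖M-1‖^2 = (M 0 0 - 1)^2 + (M 0 1)^2 + (M 1 0)^2 + (M 1 1 - 1)^2 := by
          rw [norm_mat_sq]
          simp [Matrix.sub_apply, Matrix.one_apply]
        exact dist_sq_lin _ _ _ _ _ (h3 ▸ h2)
      by_cases hbig : K2 ≤ M 0 0^2 + M 0 1^2 + M 1 0^2 + M 1 1^2
      · -- far from origin : growth dominates
        have hg1 := hgr ‖mvec M ve1‖ (norm_nonneg _)
        have hg2 := hgr ‖mvec M vnu‖ (norm_nonneg _)
        have hg3 := hgr ‖mvec M veta‖ (norm_nonneg _)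
        have hx2 : ag*(‖mvec M ve1‖^2 + ‖mvec M vnu‖^2 + ‖mvec M veta‖^2)
            = ag*((3/2)*(M 0 0^2 + M 0 1^2 + M 1 0^2 + M 1 1^2)) := by rw [hsumsq]
        have hsum2 : ag*((3/2)*(M 0 0^2 + M 0 1^2 + M 1 0^2 + M 1 1^2)) - 3*bg
            ≤ ψ₁ ‖mvec M ve1‖ + ψ₁ ‖mvec M vnu‖ + ψ₁ ‖mvec M veta‖ :=
          growth_sum _ _ _ _ _ _ _ _ _ hg1 hg2 hg3 hsumsq hag
        have hWlow : q3*(ag*((3/2)*(M 0 0^2 + M 0 1^2 + M 1 0^2 + M 1 1^2)) - 3*bg)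
            ≤ Wpsi ψ₁ ψ₂ M := by
          have h5 := mul_le_mul_of_nonneg_left hsum2 hq3pos.le
          have h6 : q3*(ψ₁ ‖mvec M ve1‖ + ψ₁ ‖mvec M vnu‖ + ψ₁ ‖mvec M veta‖)
              = q3*ψ₁ ‖mvec M ve1‖ + q3*ψ₁ ‖mvec M vnu‖ + q3*ψ₁ ‖mvec M veta‖ := by ring
          linarith [hkey, t4]
        refine le_trans (mul_le_mul_of_nonneg_right (min_le_left _ _) h0d) ?_
        exact caseA_arith q3 ag bg _ _ _ hq3pos hag hbg
          (by rw [hK2def] at hbig; exact hbig) hdistb hWlow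
      · push_neg at hbig
        by_cases hclose : |‖mvec M ve1‖ - 1| ≤ δ ∧ |‖mvec M vnu‖ - 1| ≤ δ
            ∧ |‖mvec M veta‖ - 1| ≤ δ ∧ |M.det - 1| ≤ 1/2
        · -- close to SO(2) : quadratic bound + rigidity
          obtain ⟨hc1, hc2, hc3, hc4⟩ := hclose
          have hrig := rigidity M (le_trans hc1 hδ2) (le_trans hc2 hδ2)
            (le_trans hc3 hδ2) (by rw [abs_le] at hc4; linarith [hc4.1])
          have hq11 := hq1 _ (le_trans hc1 hδ1')
          have hq12 := hq1 _ (le_trans hc2 hδ1')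
          have hq13 := hq1 _ (le_trans hc3 hδ1')
          have hsum3 : α₁*((‖mvec M ve1‖-1)^2 + (‖mvec M vnu‖-1)^2 + (‖mvec M veta‖-1)^2)
              ≤ ψ₁ ‖mvec M ve1‖ + ψ₁ ‖mvec M vnu‖ + ψ₁ ‖mvec M veta‖ := by
            have hr : α₁*((‖mvec M ve1‖-1)^2 + (‖mvec M vnu‖-1)^2 + (‖mvec M veta‖-1)^2)
                = α₁*(‖mvec M ve1‖-1)^2 + α₁*(‖mvec M vnu‖-1)^2
                  + α₁*(‖mvec M veta‖-1)^2 := by ring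
            linarith [hq11, hq12, hq13]
          have hWS : q3*(α₁*((‖mvec M ve1‖-1)^2 + (‖mvec M vnu‖-1)^2
              + (‖mvec M veta‖-1)^2)) ≤ Wpsi ψ₁ ψ₂ M := by
            have h5 := mul_le_mul_of_nonneg_left hsum3 hq3pos.le
            have h6 : q3*(ψ₁ ‖mvec M ve1‖ + ψ₁ ‖mvec M vnu‖ + ψ₁ ‖mvec M veta‖)
                = q3*ψ₁ ‖mvec M ve1‖ + q3*ψ₁ ‖mvec M vnu‖ + q3*ψ₁ ‖mvec M veta‖ := by ring
            linarith [hkey, t4]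
          refine le_trans (mul_le_mul_of_nonneg_right
            (le_trans (min_le_right _ _) (min_le_left _ _)) h0d) ?_
          exact caseB_arith q3 α₁ _ _ _ hq3pos hα₁ hrig hWS
        · -- far case : uniform positivity
          have hdb2 : distSO2 M^2 ≤ 2*K2+4 := by linarith [hdistb]
          have far : (¬|‖mvec M ve1‖ - 1| ≤ δ) ∨ (¬|‖mvec M vnu‖ - 1| ≤ δ)
              ∨ (¬|‖mvec M veta‖ - 1| ≤ δ) ∨ (¬|M.det - 1| ≤ 1/2) := by tauto
          have hb1 : |‖mvec M ve1‖| ≤ 1 + (3/2)*K2 := by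
            rw [abs_of_nonneg (norm_nonneg _)]
            apply sq_le_lin_bound
            exact nsq_le_third _ _ _ _ _ hsumsq hbig (sq_nonneg _) (sq_nonneg _)
          have hb2 : |‖mvec M vnu‖| ≤ 1 + (3/2)*K2 := by
            rw [abs_of_nonneg (norm_nonneg _)]
            apply sq_le_lin_bound
            refine nsq_le_third _ ‖mvec M ve1‖ ‖mvec M veta‖ _ _ (by linarith [hsumsq]) hbig
              (sq_nonneg _) (sq_nonneg _)
          have hb3 : |‖mvec M veta‖| ≤ 1 + (3/2)*K2 := by
            rw [abs_of_nonneg (norm_nonneg _)]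
            apply sq_le_lin_bound
            refine nsq_le_third _ ‖mvec M ve1‖ ‖mvec M vnu‖ _ _ (by linarith [hsumsq]) hbig
              (sq_nonneg _) (sq_nonneg _)
          have hdetb : |M.det| ≤ K2 := le_trans hdabs (by linarith)
          have hWfar : q3*εm ≤ Wpsi ψ₁ ψ₂ M := by
            rcases far with hf|hf|hf|hf
            · push_neg at hf
              have hε := hmin₁ _ hb1 hf.le
              have h7 : q3*εm ≤ q3*ψ₁ ‖mvec M ve1‖ :=
                mul_le_mul_of_nonneg_left (le_trans hεm1 hε) hq3pos.le
              linarith [hkey, t2, t3, t4]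
            · push_neg at hf
              have hε := hmin₁ _ hb2 hf.le
              have h7 : q3*εm ≤ q3*ψ₁ ‖mvec M vnu‖ :=
                mul_le_mul_of_nonneg_left (le_trans hεm1 hε) hq3pos.le
              linarith [hkey, t1, t3, t4]
            · push_neg at hf
              have hε := hmin₁ _ hb3 hf.le
              have h7 : q3*εm ≤ q3*ψ₁ ‖mvec M veta‖ :=
                mul_le_mul_of_nonneg_left (le_trans hεm1 hε) hq3pos.le
              linarith [hkey, t1, t2, t4]
            · push_neg at hf
              have hε := hmin₂ _ hdetb hf.le
              have h7 : q3*εm ≤ q3*ψ₂ M.det :=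
                mul_le_mul_of_nonneg_left (le_trans hεm2 hε) hq3pos.le
              linarith [hkey, t1, t2, t3, t4]
          refine le_trans (mul_le_mul_of_nonneg_right
            (le_trans (min_le_right _ _) (min_le_right _ _)) h0d) ?_
          exact caseC_arith q3 εm K2 _ _ hq3pos hεmpos hK2pos hdb2 hWfar
  · -- (v) C² regularity near SO(2)
    obtain ⟨U1, hU1o, hU11, hC21⟩ := hψ₁.c2
    obtain ⟨U2, hU2o, hU21, hC22⟩ := hψ₂.c2
    have hcontn : ∀ v : E2, Continuous fun M : Mat2 => ‖mvec M v‖ :=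
      fun v => ((contDiff_mvec v).continuous).norm
    refine ⟨((fun M : Mat2 => ‖mvec M ve1‖) ⁻¹' (U1 ∩ Ioi 0))
        ∩ ((fun M : Mat2 => ‖mvec M vnu‖) ⁻¹' (U1 ∩ Ioi 0))
        ∩ ((fun M : Mat2 => ‖mvec M veta‖) ⁻¹' (U1 ∩ Ioi 0))
        ∩ ((fun M : Mat2 => M.det) ⁻¹' U2), ?_, ?_, ?_⟩
    · have hVo : IsOpen (U1 ∩ Ioi (0:ℝ)) := hU1o.inter isOpen_Ioi
      exact (((hVo.preimage (hcontn ve1)).inter (hVo.preimage (hcontn vnu))).inter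
        (hVo.preimage (hcontn veta))).inter (hU2o.preimage contDiff_det.continuous)
    · intro R hR
      have h1 : ‖mvec R ve1‖ = 1 := by rw [norm_mvec_SO2 hR, norm_ve1]
      have h2 : ‖mvec R vnu‖ = 1 := by rw [norm_mvec_SO2 hR, norm_vnu]
      have h3 : ‖mvec R veta‖ = 1 := by rw [norm_mvec_SO2 hR, norm_veta]
      refine ⟨⟨⟨?_, ?_⟩, ?_⟩, ?_⟩
      · show ‖mvec R ve1‖ ∈ U1 ∩ Ioi 0
        rw [h1]; exact ⟨hU11, by norm_num⟩
      · show ‖mvec R vnu‖ ∈ U1 ∩ Ioi 0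
        rw [h2]; exact ⟨hU11, by norm_num⟩
      · show ‖mvec R veta‖ ∈ U1 ∩ Ioi 0
        rw [h3]; exact ⟨hU11, by norm_num⟩
      · show R.det ∈ U2
        rw [hR.2]; exact hU21
    · intro N hN
      obtain ⟨⟨⟨hm1, hm2⟩, hm3⟩, hm4⟩ := hN
      apply ContDiffAt.contDiffWithinAt
      have hne1 : mvec N ve1 ≠ 0 := norm_pos_iff.mp hm1.2
      have hne2 : mvec N vnu ≠ 0 := norm_pos_iff.mp hm2.2
      have hne3 : mvec N veta ≠ 0 := norm_pos_iff.mp hm3.2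
      have c1 : ContDiffAt ℝ 2 (fun N : Mat2 => ψ₁ ‖mvec N ve1‖) N := by
        exact (hC21.contDiffAt (hU1o.mem_nhds hm1.1)).comp N (contDiff_norm_mvec ve1 hne1)
      have c2 : ContDiffAt ℝ 2 (fun N : Mat2 => ψ₁ ‖mvec N vnu‖) N := by
        exact (hC21.contDiffAt (hU1o.mem_nhds hm2.1)).comp N (contDiff_norm_mvec vnu hne2)
      have c3 : ContDiffAt ℝ 2 (fun N : Mat2 => ψ₁ ‖mvec N veta‖) N := by
        exact (hC21.contDiffAt (hU1o.mem_nhds hm3.1)).comp N (contDiff_norm_mvec veta hne3)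
      have c4 : ContDiffAt ℝ 2 (fun N : Mat2 => ψ₂ N.det) N := by
        exact (hC22.contDiffAt (hU2o.mem_nhds hm4)).comp N contDiff_det.contDiffAt
      show ContDiffAt ℝ 2 (fun M : Mat2 => 4 / Real.sqrt 3 *
        (1 / 2 * (ψ₁ ‖mvec M ve1‖ + ψ₁ ‖mvec M vnu‖ + ψ₁ ‖mvec M veta‖)
          + 3 * ψ₂ M.det)) N
      exact contDiffAt_const.mul
        ((contDiffAt_const.mul ((c1.add c2).add c3)).add (contDiffAt_const.mul c4))
end
end
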